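/- Let f : [-1/2,1/2] → ℝ be convex and for each integer j ≥ 1 set b_j = 2^{j-1} ∫_{-2^{-j}}^{2^{-j}} f(t) dt − f(0). Then for every integer j ≥ 1 one has 0 ≤ b_{j+1} ≤ (1/2) b_j. -/

import Mathlib

/-! With `a = 2⁻ʲ`, `b j` is the excess `(2a)⁻¹ ∫_{-a}^{a} f - f 0` of the mean of `f` over
`[-a, a]` over its value at the centre. It is nonnegative because `f 0 ≤ (f t + f (-t)) / 2`.
Halving `a` at least halves it: substituting `t = s / 2` and using
`f (s / 2) ≤ (f s + f 0) / 2` gives `2 ∫_{-a/2}^{a/2} f ≤ (1/2) ∫_{-a}^{a} f + a f 0`. -/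

open MeasureTheory Set

theorem ConvexOn.map_add_div_two_le {s : Set ℝ} {f : ℝ → ℝ} (hf : ConvexOn ℝ s f) {x y : ℝ}
    (hx : x ∈ s) (hy : y ∈ s) : f ((x + y) / 2) ≤ (f x + f y) / 2 := by
  have h := hf.2 hx hy (by norm_num : (0:ℝ) ≤ 1/2) (by norm_num : (0:ℝ) ≤ 1/2) (by norm_num)
  simp only [smul_eq_mul] at h
  rw [show (x + y) / 2 = 1 / 2 * x + 1 / 2 * y by ring]
  linarith

theorem ConvexOn.exists_abs_le_on_Icc {c d : ℝ} {f : ℝ → ℝ} (hf : ConvexOn ℝ (Icc c d) f) :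
    ∃ M, ∀ x ∈ Icc c d, |f x| ≤ M := by
  rcases (Icc c d).eq_empty_or_nonempty with hcd | ⟨m, hm⟩
  · exact ⟨0, by simp [hcd]⟩
  have hcd : c ≤ d := hm.1.trans hm.2
  have hc : c ∈ Icc c d := left_mem_Icc.2 hcd
  have hd : d ∈ Icc c d := right_mem_Icc.2 hcd
  set M₀ := max (f c) (f d)
  have hupper : ∀ x ∈ Icc c d, f x ≤ M₀ := fun x hx =>
    hf.le_on_segment hc hd (by rwa [segment_eq_Icc hcd])
  -- reflecting `x` through the midpoint turns the upper bound into a lower one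
  have hlower : ∀ x ∈ Icc c d, 2 * f ((c + d) / 2) - M₀ ≤ f x := fun x hx => by
    have hx' : c + d - x ∈ Icc c d := ⟨by linarith [hx.2], by linarith [hx.1]⟩
    have hmid := hf.map_add_div_two_le hx hx'
    rw [show (x + (c + d - x)) / 2 = (c + d) / 2 by ring] at hmid
    linarith [hupper _ hx']
  set L := 2 * f ((c + d) / 2) - M₀
  refine ⟨max |M₀| |L|, fun x hx => abs_le.2 ⟨?_, ?_⟩⟩
  · linarith [hlower x hx, neg_abs_le L, le_max_right |M₀| |L|]
  · linarith [hupper x hx, le_abs_self M₀, le_max_left |M₀| |L|]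

theorem ConvexOn.integrableOn_Icc {c d : ℝ} {f : ℝ → ℝ} (hf : ConvexOn ℝ (Icc c d) f) :
    IntegrableOn f (Icc c d) := by
  obtain ⟨M, hM⟩ := hf.exists_abs_le_on_Icc
  have hcont : ContinuousOn f (Ioo c d) := by
    simpa only [interior_Icc] using hf.continuousOn_interior
  rw [integrableOn_Icc_iff_integrableOn_Ioo]
  exact .of_bound measure_Ioo_lt_top (hcont.aestronglyMeasurable measurableSet_Ioo) M
    (ae_restrict_of_forall_mem measurableSet_Ioo fun x hx => hM x (Ioo_subset_Icc_self hx))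

theorem ConvexOn.intervalIntegrable {c d : ℝ} {f : ℝ → ℝ} (hf : ConvexOn ℝ (Icc c d) f)
    (hcd : c ≤ d) : IntervalIntegrable f volume c d :=
  (intervalIntegrable_iff_integrableOn_Icc_of_le hcd).2 hf.integrableOn_Icc

noncomputable def localAverageBias (f : ℝ → ℝ) (a : ℝ) : ℝ :=
  (2 * a)⁻¹ * (∫ t in (-a)..a, f t) - f 0

section LocalAverageBias

variable {f : ℝ → ℝ} {a : ℝ}

theorem localAverageBias_nonneg (hf : ConvexOn ℝ (Icc (-a) a) f) (ha : 0 < a) :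
    0 ≤ localAverageBias f a := by
  have hint : IntervalIntegrable f volume (-a) a := hf.intervalIntegrable (by linarith)
  have hint_neg : IntervalIntegrable (fun t => f (-t)) volume (-a) a := by
    simpa using ((IntervalIntegrable.iff_comp_neg).1 hint).symm
  have hsymm : ∀ t ∈ Icc (-a) a, f 0 ≤ (f t + f (-t)) / 2 := fun t ht => by
    have hnt : -t ∈ Icc (-a) a := ⟨neg_le_neg ht.2, by linarith [ht.1]⟩
    simpa using hf.map_add_div_two_le ht hnt
  have hmean : 2 * a * f 0 ≤ ∫ t in (-a)..a, f t :=
    calc 2 * a * f 0 = ∫ _ in (-a)..a, f 0 := by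
          rw [intervalIntegral.integral_const, smul_eq_mul]; ring
      _ ≤ ∫ t in (-a)..a, (f t + f (-t)) / 2 :=
        intervalIntegral.integral_mono_on (by linarith) intervalIntegrable_const
          ((hint.add hint_neg).div_const 2) hsymm
      _ = ∫ t in (-a)..a, f t := by
        rw [intervalIntegral.integral_div, intervalIntegral.integral_add hint hint_neg,
          intervalIntegral.integral_comp_neg, neg_neg]
        ring
  rw [localAverageBias, sub_nonneg, le_inv_mul_iff₀ (by positivity)]
  exact hmean

theorem localAverageBias_half_le (hf : ConvexOn ℝ (Icc (-a) a) f) (ha : 0 < a) :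
    localAverageBias f (a / 2) ≤ localAverageBias f a / 2 := by
  have hint : IntervalIntegrable f volume (-a) a := hf.intervalIntegrable (by linarith)
  have hint_half : IntervalIntegrable (fun s => f (s / 2)) volume (-a) a := by
    have := (hf.subset (Icc_subset_Icc (by linarith) (by linarith)) (convex_Icc _ _)
      |>.intervalIntegrable (by linarith : -a / 2 ≤ a / 2)).comp_mul_left (c := 2⁻¹)
    convert this using 1 <;> ring_nf
  have hshrink : ∀ s ∈ Icc (-a) a, f (s / 2) ≤ (f s + f 0) / 2 := fun s hs => by
    simpa using hf.map_add_div_two_le hs ⟨by linarith, ha.le⟩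
  have hscale : 2 * ∫ t in (-(a / 2))..(a / 2), f t ≤ (∫ t in (-a)..a, f t) / 2 + a * f 0 :=
    calc 2 * ∫ t in (-(a / 2))..(a / 2), f t = ∫ s in (-a)..a, f (s / 2) := by
          rw [intervalIntegral.integral_comp_div _ two_ne_zero, smul_eq_mul, neg_div]
      _ ≤ ∫ s in (-a)..a, (f s + f 0) / 2 :=
        intervalIntegral.integral_mono_on (by linarith) hint_half
          ((hint.add intervalIntegrable_const).div_const 2) hshrink
      _ = (∫ t in (-a)..a, f t) / 2 + a * f 0 := by
        rw [intervalIntegral.integral_div,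
          intervalIntegral.integral_add hint intervalIntegrable_const,
          intervalIntegral.integral_const, smul_eq_mul]
        ring
  unfold localAverageBias
  rw [show 2 * (a / 2) = a by ring]
  field_simp
  linarith

end LocalAverageBias

theorem bias_nonneg_and_halving
    (f : ℝ → ℝ) (hf : ConvexOn ℝ (Set.Icc (-(1:ℝ)/2) (1/2)) f)
    (b : ℕ → ℝ)
    (hb : ∀ j : ℕ, 1 ≤ j →
      b j = (2:ℝ) ^ ((j:ℤ) - 1) * (∫ t in (-(2:ℝ) ^ (-(j:ℤ)))..((2:ℝ) ^ (-(j:ℤ))), f t) - f 0) :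
    ∀ j : ℕ, 1 ≤ j → 0 ≤ b (j + 1) ∧ b (j + 1) ≤ (1/2) * b j := by
  have hbias : ∀ j : ℕ, 1 ≤ j → b j = localAverageBias f (2 ^ (-(j:ℤ))) := fun j hj => by
    rw [hb j hj, localAverageBias, zpow_sub₀ two_ne_zero, zpow_neg, zpow_one]
    field_simp
  intro j hj
  set a : ℝ := 2 ^ (-(j:ℤ)) with ha_def
  have ha : 0 < a := by positivity
  have ha_le : a ≤ 1 / 2 := by
    simpa [ha_def] using zpow_le_zpow_right₀ (by norm_num : (1:ℝ) ≤ 2) (by omega : -(j:ℤ) ≤ -1)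
  have hnext : (2:ℝ) ^ (-((j + 1 : ℕ) : ℤ)) = a / 2 := by
    rw [ha_def, Nat.cast_succ, neg_add, zpow_add₀ two_ne_zero, zpow_neg_one, div_eq_mul_inv]
  have hfa : ConvexOn ℝ (Icc (-a) a) f :=
    hf.subset (Icc_subset_Icc (by linarith) ha_le) (convex_Icc _ _)
  rw [hbias j hj, hbias (j + 1) (by omega), hnext]
  refine ⟨localAverageBias_nonneg ?_ (half_pos ha), ?_⟩
  · exact hfa.subset (Icc_subset_Icc (by linarith) (by linarith)) (convex_Icc _ _)
  · linarith [localAverageBias_half_le hfa ha]
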